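/- Let $\bar\ell: \mathbb{R}^n \to \mathbb{R}$ be $L$-smooth (gradient Lipschitz with constant $L$) and satisfy the Polyak–Łojasiewicz inequality $\frac{1}{2}\|\nabla\bar\ell(\theta)\|_2^2 \ge \mu(\bar\ell(\theta) - \ell^*)$ with $\ell^* = \inf \bar\ell$. Consider the stochastic update $\theta_{k+1} = \theta_k - \eta g_k$ with $\eta \le 1/(4L)$, where conditional on $\theta_k$, $\mathbb{E}[g_k] = \nabla\bar\ell_{\mathrm{sur}}(\theta_k)$ and $\mathbb{E}\|g_k - \nabla\bar\ell(\theta_k)\|_2^2 \le \mathcal{E}(\theta_k)$ (surrogate MSE against the true gradient). Then $\mathbb{E}[\bar\ell(\theta_{k+1}) - \ell^* \mid \theta_k] \le (1-\mu\eta)(\bar\ell(\theta_k) - \ell^*) + \frac{5}{4}\eta\,\mathcal{E}(\theta_k)$. -/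

import Mathlib

open MeasureTheory

open scoped RealInnerProductSpace in
/-- Descent lemma for functions with `L`-Lipschitz gradient. -/
lemma descent_lemma_aux {n : ℕ} (ℓ : EuclideanSpace ℝ (Fin n) → ℝ) (L : ℝ) (hL : 0 ≤ L)
    (hdiff : Differentiable ℝ ℓ)
    (hsmooth : ∀ x y, ‖gradient ℓ x - gradient ℓ y‖ ≤ L * ‖x - y‖)
    (x v : EuclideanSpace ℝ (Fin n)) :
    ℓ (x + v) ≤ ℓ x + ⟪gradient ℓ x, v⟫ + L / 2 * ‖v‖ ^ 2 := by
  set h : ℝ → ℝ := fun t => ℓ (x + t • v) - t * ⟪gradient ℓ x, v⟫ - L / 2 * t ^ 2 * ‖v‖ ^ 2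
    with hh
  have hpath : ∀ t : ℝ, HasDerivAt (fun s : ℝ => x + s • v) v t := by
    intro t
    simpa using ((hasDerivAt_id t).smul_const v).const_add x
  have hderiv : ∀ t : ℝ, HasDerivAt h
      (⟪gradient ℓ (x + t • v), v⟫ - ⟪gradient ℓ x, v⟫ - L * t * ‖v‖ ^ 2) t := by
    intro t
    have h1 : HasDerivAt (fun s : ℝ => ℓ (x + s • v)) ⟪gradient ℓ (x + t • v), v⟫ t := by
      have h0 := ((hdiff (x + t • v)).hasGradientAt.hasFDerivAt).comp_hasDerivAt t (hpath t)
      rw [← InnerProductSpace.toDual_apply_apply (𝕜 := ℝ)]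
      simp [Function.comp] at h0 ⊢
      exact h0
    have h2 : HasDerivAt (fun s : ℝ => s * ⟪gradient ℓ x, v⟫) ⟪gradient ℓ x, v⟫ t := by
      simpa using (hasDerivAt_id t).mul_const ⟪gradient ℓ x, v⟫
    have h3 : HasDerivAt (fun s : ℝ => L / 2 * s ^ 2 * ‖v‖ ^ 2) (L * t * ‖v‖ ^ 2) t := by
      have := ((hasDerivAt_pow 2 t).const_mul (L / 2)).mul_const (‖v‖ ^ 2)
      refine this.congr_deriv ?_
      ring
    exact (h1.sub h2).sub h3
  have hanti : AntitoneOn h (Set.Icc (0 : ℝ) 1) := by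
    apply antitoneOn_of_deriv_nonpos (convex_Icc 0 1)
    · exact Continuous.continuousOn
        (Differentiable.continuous fun t => (hderiv t).differentiableAt)
    · intro t _
      exact (hderiv t).differentiableAt.differentiableWithinAt
    · intro t ht
      rw [interior_Icc] at ht
      rw [(hderiv t).deriv]
      have hinner : ⟪gradient ℓ (x + t • v) - gradient ℓ x, v⟫ ≤
          ‖gradient ℓ (x + t • v) - gradient ℓ x‖ * ‖v‖ := real_inner_le_norm _ _
      have hlip := hsmooth (x + t • v) x
      have hn : ‖x + t • v - x‖ = t * ‖v‖ := by
        simp [norm_smul, abs_of_pos ht.1]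
      rw [hn] at hlip
      have hv : (0:ℝ) ≤ ‖v‖ := norm_nonneg _
      rw [inner_sub_left] at hinner
      nlinarith [ht.1.le, mul_le_mul_of_nonneg_right hlip hv]
  have := hanti (Set.mem_Icc.mpr ⟨le_refl 0, zero_le_one⟩)
    (Set.mem_Icc.mpr ⟨zero_le_one, le_refl 1⟩) zero_le_one
  simp only [hh, one_smul, zero_smul, add_zero, one_pow, zero_pow, one_mul, zero_mul,
    mul_zero, sub_zero] at this
  linarith

set_option maxHeartbeats 1000000 in
/-- One-step descent inequality for SGD with a biased surrogate gradient.
For `L`-smooth `ℓ̄` satisfying PL(μ) with `ℓ* = inf ℓ̄`, step size `η ≤ 1/(4L)`, and a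
random gradient `g` with surrogate-MSE `E‖g - ∇ℓ̄(θ)‖² ≤ 𝓔`, one has
`E[ℓ̄(θ - η g) - ℓ*] ≤ (1-μη)(ℓ̄(θ) - ℓ*) + (5/4)η𝓔`. -/
theorem sgd_one_step_descent
    {n : ℕ} {Ω : Type*} [MeasurableSpace Ω] (μpr : Measure Ω) [IsProbabilityMeasure μpr]
    (ℓ : EuclideanSpace ℝ (Fin n) → ℝ) (ℓstar L μpl η 𝓔 : ℝ)
    (hL : 0 < L) (hμpl : 0 < μpl) (hη : 0 < η) (hη4 : η ≤ 1 / (4 * L))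
    (hdiff : Differentiable ℝ ℓ)
    (hsmooth : ∀ x y, ‖gradient ℓ x - gradient ℓ y‖ ≤ L * ‖x - y‖)
    (hstar : ℓstar = ⨅ x, ℓ x)
    (hPL : ∀ x, μpl * (ℓ x - ℓstar) ≤ (1 / 2) * ‖gradient ℓ x‖ ^ 2)
    (θ : EuclideanSpace ℝ (Fin n)) (g : Ω → EuclideanSpace ℝ (Fin n))
    (hg : MemLp g 2 μpr)
    (hmse : ∫ ω, ‖g ω - gradient ℓ θ‖ ^ 2 ∂μpr ≤ 𝓔) :
    ∫ ω, (ℓ (θ - η • g ω) - ℓstar) ∂μpr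
      ≤ (1 - μpl * η) * (ℓ θ - ℓstar) + (5 / 4) * η * 𝓔 := by
  set G := gradient ℓ θ with hG
  have hLη : L * η ^ 2 ≤ η / 4 := by
    rw [le_div_iff₀ (by positivity)] at hη4
    nlinarith [mul_le_mul_of_nonneg_left hη4 hη.le]
  -- pointwise bound
  have claim : ∀ ω, ℓ (θ - η • g ω) - ℓstar ≤
      (1 - μpl * η) * (ℓ θ - ℓstar) + (5 / 4) * η * ‖g ω - G‖ ^ 2 := by
    intro ω
    have hdesc := descent_lemma_aux ℓ L hL.le hdiff hsmooth θ (-(η • g ω))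
    rw [← sub_eq_add_neg] at hdesc
    set e := g ω - G with he
    have hge : g ω = G + e := by simp [he]
    have hinner : (inner ℝ G (-(η • g ω)) : ℝ) = -η * ‖G‖ ^ 2 - η * inner ℝ G e := by
      rw [hge, inner_neg_right, inner_smul_right, inner_add_right,
        real_inner_self_eq_norm_sq]
      push_cast
      ring
    have hyoung : -(inner ℝ G e : ℝ) ≤ (1/4) * ‖G‖ ^ 2 + ‖e‖ ^ 2 := by
      have h1 : -(inner ℝ G e : ℝ) ≤ ‖G‖ * ‖e‖ := by
        have h0 := real_inner_le_norm (-G) e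
        rw [inner_neg_left, norm_neg] at h0
        linarith
      nlinarith [sq_nonneg (‖G‖ / 2 - ‖e‖)]
    have hnv : ‖-(η • g ω)‖ ^ 2 ≤ η ^ 2 * (2 * ‖G‖ ^ 2 + 2 * ‖e‖ ^ 2) := by
      have h1 : ‖g ω‖ ≤ ‖G‖ + ‖e‖ := by rw [hge]; exact norm_add_le _ _
      have h2 : ‖-(η • g ω)‖ = η * ‖g ω‖ := by
        simp [norm_smul, abs_of_pos hη]
      rw [h2]
      nlinarith [mul_self_le_mul_self (norm_nonneg (g ω)) h1, sq_nonneg (‖G‖ - ‖e‖),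
        sq_nonneg η, norm_nonneg (g ω), norm_nonneg G, norm_nonneg e]
    have hpl := hPL θ
    rw [← hG] at hpl
    nlinarith [sq_nonneg ‖e‖, sq_nonneg ‖G‖, mul_le_mul_of_nonneg_right hLη
      (by positivity : (0:ℝ) ≤ ‖G‖ ^ 2 + ‖e‖ ^ 2), hη.le]
  -- integrability
  have he2 : Integrable (fun ω => ‖g ω - G‖ ^ 2) μpr :=
    ((hg.sub (memLp_const G)).norm.integrable_sq)
  have hRHSint : Integrable (fun ω => (1 - μpl * η) * (ℓ θ - ℓstar)
      + (5 / 4) * η * ‖g ω - G‖ ^ 2) μpr :=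
    (integrable_const _).add (he2.const_mul _)
  have hgnorm : Integrable (fun ω => ‖g ω‖) μpr := by
    have h1 : MemLp g 1 μpr := hg.mono_exponent (by norm_num)
    exact (memLp_one_iff_integrable.mp h1).norm
  have hgsq : Integrable (fun ω => ‖g ω‖ ^ 2) μpr := hg.norm.integrable_sq
  -- lower bound for integrability
  set B : Ω → ℝ := fun ω => (ℓ θ - ℓstar) - ‖G‖ * (η * ‖g ω‖) - 3 * L / 2 * (η * ‖g ω‖) ^ 2
    with hB
  have hBint : Integrable B μpr := by
    have h1 : Integrable (fun ω => ‖G‖ * (η * ‖g ω‖)) μpr := by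
      simpa [mul_assoc] using (hgnorm.const_mul (‖G‖ * η))
    have h2 : Integrable (fun ω => 3 * L / 2 * (η * ‖g ω‖) ^ 2) μpr := by
      have := hgsq.const_mul (3 * L / 2 * η ^ 2)
      refine this.congr (Filter.Eventually.of_forall fun ω => ?_)
      ring
    exact ((integrable_const _).sub h1).sub h2
  have hlow : ∀ ω, B ω ≤ ℓ (θ - η • g ω) - ℓstar := by
    intro ω
    set y := θ - η • g ω with hy
    have hdesc := descent_lemma_aux ℓ L hL.le hdiff hsmooth y (η • g ω)
    have hyv : y + η • g ω = θ := by simp [hy]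
    rw [hyv] at hdesc
    have hinner : (inner ℝ (gradient ℓ y) (η • g ω) : ℝ) ≤ ‖gradient ℓ y‖ * (η * ‖g ω‖) := by
      have h0 := real_inner_le_norm (gradient ℓ y) (η • g ω)
      have hns : ‖η • g ω‖ = η * ‖g ω‖ := by simp [norm_smul, abs_of_pos hη]
      rwa [hns] at h0
    have hgrad : ‖gradient ℓ y‖ ≤ ‖G‖ + L * (η * ‖g ω‖) := by
      have := hsmooth y θ
      have hyθ : ‖y - θ‖ = η * ‖g ω‖ := by
        simp [hy, norm_smul, abs_of_pos hη]
      rw [hyθ] at this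
      have := norm_le_norm_add_norm_sub' (gradient ℓ y) G
      have h2 := hsmooth y θ
      calc ‖gradient ℓ y‖ ≤ ‖G‖ + ‖gradient ℓ y - G‖ := by
            have := norm_sub_norm_le (gradient ℓ y) G
            linarith [abs_le.mp (abs_norm_sub_norm_le (gradient ℓ y) G)]
        _ ≤ ‖G‖ + L * (η * ‖g ω‖) := by rw [hG]; rw [hyθ] at h2; linarith
    have hns2 : ‖η • g ω‖ ^ 2 = (η * ‖g ω‖) ^ 2 := by
      simp [norm_smul, abs_of_pos hη]
    rw [hns2] at hdesc
    have hnn : 0 ≤ η * ‖g ω‖ := by positivity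
    simp only [hB]
    nlinarith [mul_le_mul_of_nonneg_right hgrad hnn]
  -- F is integrable
  have hFmeas : AEStronglyMeasurable (fun ω => ℓ (θ - η • g ω) - ℓstar) μpr := by
    have h1 : AEStronglyMeasurable (fun ω => θ - η • g ω) μpr :=
      aestronglyMeasurable_const.sub (hg.aestronglyMeasurable.const_smul η)
    exact (hdiff.continuous.comp_aestronglyMeasurable h1).sub aestronglyMeasurable_const
  have hFint : Integrable (fun ω => ℓ (θ - η • g ω) - ℓstar) μpr := by
    refine Integrable.mono' (hBint.abs.add hRHSint.abs) hFmeas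
      (Filter.Eventually.of_forall fun ω => ?_)
    simp only [Pi.add_apply]
    rw [Real.norm_eq_abs, abs_le]
    have habs : (0:ℝ) ≤ |(1 - μpl * η) * (ℓ θ - ℓstar) + (5 / 4) * η * ‖g ω - G‖ ^ 2| :=
      abs_nonneg _
    have hrle := le_abs_self ((1 - μpl * η) * (ℓ θ - ℓstar) + (5 / 4) * η * ‖g ω - G‖ ^ 2)
    have hbabs : -|B ω| ≤ B ω := neg_abs_le _
    have hbnn : (0:ℝ) ≤ |B ω| := abs_nonneg _
    constructor
    · linarith [hlow ω]
    · linarith [claim ω]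
  -- integrate
  have hmono : ∫ ω, (ℓ (θ - η • g ω) - ℓstar) ∂μpr ≤
      ∫ ω, ((1 - μpl * η) * (ℓ θ - ℓstar) + (5 / 4) * η * ‖g ω - G‖ ^ 2) ∂μpr :=
    integral_mono hFint hRHSint claim
  have hsplit : ∫ ω, ((1 - μpl * η) * (ℓ θ - ℓstar) + (5 / 4) * η * ‖g ω - G‖ ^ 2) ∂μpr
      = (1 - μpl * η) * (ℓ θ - ℓstar) + (5 / 4) * η * ∫ ω, ‖g ω - G‖ ^ 2 ∂μpr := by
    rw [integral_add (integrable_const _) (he2.const_mul _), integral_const,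
      integral_const_mul]
    simp
  have hfin : (5 / 4) * η * ∫ ω, ‖g ω - G‖ ^ 2 ∂μpr ≤ (5 / 4) * η * 𝓔 := by
    apply mul_le_mul_of_nonneg_left hmse (by positivity)
  linarith [hmono, hsplit ▸ hmono]
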